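/- arXiv:2103.14649 — 3 statements merged into one kernel-verified Lean document; each statement's English description precedes it below -/
import Mathlib

section
/- Let μ be the product probability measure on Ω = ℕ → Bool whose coordinates are independent fair coin flips (each coordinate uniform on Bool), and let v : Ω → ℕ → Bool be predictable. Then for every round index k ∈ ℕ, the probability that the round-k coin equals its target is exactly one half: μ {ω | ω k = v ω k} = 1/2. -/
open MeasureTheory

/-- `μ` is the product probability measure on `Ω = ℕ → Bool` whose coordinates are
independent fair coin flips: every cylinder event fixing the coins on a finite set `s`
of rounds has probability `(1/2)^|s|`.  (Taking `s = ∅` shows `μ` is a probability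
measure, and these cylinder probabilities uniquely determine the product measure.) -/
def IsFairCoinSeq (μ : Measure (ℕ → Bool)) : Prop :=
  ∀ (s : Finset ℕ) (f : ℕ → Bool),
    μ {ω | ∀ k ∈ s, ω k = f k} = (1 / 2 : ENNReal) ^ s.card

/-- `v` is predictable: the round-`k` target depends only on the coins of earlier
rounds. -/
def Predictable (v : (ℕ → Bool) → ℕ → Bool) : Prop :=
  ∀ ω ω' k, (∀ j < k, ω j = ω' j) → v ω k = v ω' k

/-!
Split the event according to the first `k` coins. On the fiber of a prefix `g`, predictability
freezes the round-`k` target at its value on any sequence extending `g`, so hitting it is the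
cylinder event fixing rounds `0, …, k`, of probability `2⁻⁽ᵏ⁺¹⁾`. Summing over the `2ᵏ` prefixes
gives `1/2`.
-/

open Finset

def padPrefix {k : ℕ} (g : Fin k → Bool) : ℕ → Bool :=
  fun j => if h : j < k then g ⟨j, h⟩ else false

lemma padPrefix_of_lt {k : ℕ} (g : Fin k → Bool) {j : ℕ} (hj : j < k) :
    padPrefix g j = g ⟨j, hj⟩ :=
  dif_pos hj

def coinPrefix (k : ℕ) (ω : ℕ → Bool) : Fin k → Bool :=
  fun i => ω i

lemma measurable_coinPrefix (k : ℕ) : Measurable (coinPrefix k) :=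
  measurable_pi_lambda _ fun i => measurable_pi_apply (i : ℕ)

def hittingPattern (v : (ℕ → Bool) → ℕ → Bool) {k : ℕ} (g : Fin k → Bool) : ℕ → Bool :=
  Function.update (padPrefix g) k (v (padPrefix g) k)

lemma coinPrefix_fiber_inter_hit_eq_cylinder {v : (ℕ → Bool) → ℕ → Bool} (hv : Predictable v)
    {k : ℕ} (g : Fin k → Bool) :
    coinPrefix k ⁻¹' {g} ∩ {ω | ω k = v ω k} =
      {ω | ∀ j ∈ range (k + 1), ω j = hittingPattern v g j} := by
  ext ω
  simp only [Set.mem_inter_iff, Set.mem_preimage, Set.mem_singleton_iff, Set.mem_ofPred_eq,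
    mem_range, Nat.lt_succ_iff_lt_or_eq, hittingPattern]
  constructor
  · rintro ⟨rfl, hit⟩ j (hj | rfl)
    · rw [Function.update_of_ne hj.ne, padPrefix_of_lt _ hj]
      rfl
    · rw [Function.update_self, hit]
      exact hv _ _ j fun i hi => (padPrefix_of_lt (coinPrefix j ω) hi).symm
  · intro h
    have hg : coinPrefix k ω = g := funext fun i => by
      simpa [coinPrefix, Function.update_of_ne i.2.ne, padPrefix_of_lt _ i.2] using
        h i (Or.inl i.2)
    subst hg
    refine ⟨rfl, ?_⟩
    rw [h k (Or.inr rfl), Function.update_self]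
    exact hv _ _ k fun i hi => padPrefix_of_lt _ hi

lemma two_pow_mul_half_pow_succ (k : ℕ) :
    (2 : ENNReal) ^ k * (1 / 2) ^ (k + 1) = 1 / 2 := by
  rw [one_div, pow_succ, ← mul_assoc, ← mul_pow,
    ENNReal.mul_inv_cancel two_ne_zero ENNReal.ofNat_ne_top, one_pow, one_mul]

/-- For every round `k`, the probability that the round-`k` coin equals its
predictable target is exactly one half. -/
theorem coin_matches_target_prob_half
    (μ : Measure (ℕ → Bool)) (hμ : IsFairCoinSeq μ)
    (v : (ℕ → Bool) → ℕ → Bool) (hv : Predictable v) (k : ℕ) :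
    μ {ω | ω k = v ω k} = 1 / 2 := by
  have hfiber (g : Fin k → Bool) : MeasurableSet (coinPrefix k ⁻¹' {g}) :=
    measurable_coinPrefix k (measurableSet_singleton g)
  calc μ {ω | ω k = v ω k}
      = ∑ g, μ.restrict {ω | ω k = v ω k} (coinPrefix k ⁻¹' {g}) := by
        rw [sum_measure_preimage_singleton _ fun g _ => hfiber g, coe_univ, Set.preimage_univ,
          Measure.restrict_apply_univ]
    _ = ∑ _g : Fin k → Bool, (1 / 2) ^ (k + 1) := by
        simp_rw [Measure.restrict_apply (hfiber _), coinPrefix_fiber_inter_hit_eq_cylinder hv,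
          hμ (range (k + 1)), card_range]
    _ = 1 / 2 := by
        rw [sum_const, card_univ, Fintype.card_fun, Fintype.card_bool, Fintype.card_fin,
          nsmul_eq_mul, Nat.cast_pow, Nat.cast_ofNat, two_pow_mul_half_pow_succ]
end

section
/- Let μ be the product probability measure on Ω = ℕ → Bool whose coordinates are independent fair coin flips, and let v : Ω → ℕ → Bool be predictable. Then for every r ∈ ℕ, the probability that some coin among the first r rounds equals its target is μ {ω | ∃ k < r, ω k = v ω k} = 1 − (1/2)^r. (This is the paper's Claim that, with probability Pr(r) = 1 − (1/2)^r, by the end of round r all correct processors hold the same estimate and decide.) -/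
open MeasureTheory

/-!
There is a single coin sequence `missSeq v` that misses every target: its round-`k` coin is
the negation of the target computed from its own earlier coins. By predictability, a sequence
misses its first `r` targets exactly when it agrees with `missSeq v` on the first `r` rounds,
so the complementary event is a cylinder of probability `(1/2)^r`.
-/

def missSeq (v : (ℕ → Bool) → ℕ → Bool) : ℕ → Bool
  | k => !v (fun j => if j < k then missSeq v j else false) k

namespace Predictable

variable {v : (ℕ → Bool) → ℕ → Bool}

lemma missSeq_eq_not (hv : Predictable v) {ω : ℕ → Bool} {k : ℕ}
    (h : ∀ j < k, ω j = missSeq v j) : missSeq v k = !v ω k := by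
  rw [missSeq, hv _ ω k fun j hj => by simp [hj, h j hj]]

lemma forall_lt_eq_missSeq_iff (hv : Predictable v) (ω : ℕ → Bool) (r : ℕ) :
    (∀ k < r, ω k = missSeq v k) ↔ ∀ k < r, ω k ≠ v ω k := by
  constructor
  · intro h k hk
    rw [← Bool.eq_not_iff, h k hk, missSeq_eq_not hv fun j hj => h j (hj.trans hk)]
  · intro hne k
    induction k using Nat.strong_induction_on with
    | _ k ih =>
      intro hk
      rw [missSeq_eq_not hv fun j hj => ih j hj (hj.trans hk)]
      exact Bool.eq_not_iff.mpr (hne k hk)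

end Predictable

namespace IsFairCoinSeq

lemma isProbabilityMeasure {μ : Measure (ℕ → Bool)} (hμ : IsFairCoinSeq μ) :
    IsProbabilityMeasure μ :=
  ⟨by simpa using hμ ∅ fun _ => false⟩

end IsFairCoinSeq

lemma measurableSet_cylinder {ι α : Type*} [MeasurableSpace α] [MeasurableSingletonClass α]
    (s : Finset ι) (f : ι → α) : MeasurableSet {ω : ι → α | ∀ k ∈ s, ω k = f k} := by
  simp only [Set.ofPred_forall]
  exact .biInter s.countable_toSet fun k _ =>
    (measurableSet_singleton (f k)).preimage (measurable_pi_apply k)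

/-- The probability that some coin among the first `r` rounds equals its predictable
target is `1 - (1/2)^r`. -/
theorem some_coin_matches_by_round_r
    (μ : Measure (ℕ → Bool)) (hμ : IsFairCoinSeq μ)
    (v : (ℕ → Bool) → ℕ → Bool) (hv : Predictable v) (r : ℕ) :
    μ {ω | ∃ k < r, ω k = v ω k} = 1 - (1 / 2 : ENNReal) ^ r := by
  have := hμ.isProbabilityMeasure
  have hmatch : {ω | ∃ k < r, ω k = v ω k} =
      {ω | ∀ k ∈ Finset.range r, ω k = missSeq v k}ᶜ := by
    ext ω
    simp only [Set.mem_compl_iff, Set.mem_ofPred_eq, Finset.mem_range,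
      hv.forall_lt_eq_missSeq_iff ω r]
    push Not
    rfl
  rw [hmatch, prob_compl_eq_one_sub (measurableSet_cylinder _ _), hμ, Finset.card_range]
end

section
/- Let μ be the product probability measure on Ω = ℕ → Bool whose coordinates are independent fair coin flips, and let v : Ω → ℕ → Bool be predictable. Then for every M ∈ ℕ, the probability that no coin among the first M rounds equals its target is μ {ω | ∀ k < M, ω k ≠ v ω k} = (1/2)^M. (This is the probability with which the algorithm, run for a predefined bound of M rounds, fails to decide and may violate the safety requirements; it is exponentially small in M.) -/
open MeasureTheory

/-! Predictability leaves a coin sequence exactly one way to miss its target in every round: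
at round `k` the earlier coins already fix the target, and the coin must be its negation.
So the event that no coin among the first `M` rounds matches is the cylinder fixing those
`M` coins to this unique path, of probability `(1/2)^M`. -/

/-- The value `false` used for the coins from round `k` on is arbitrary: by predictability the
round-`k` target does not see them. -/
def avoidingPath (v : (ℕ → Bool) → ℕ → Bool) : ℕ → Bool
  | k => !v (fun j => if _ : j < k then avoidingPath v j else false) k

namespace Predictable

variable {v : (ℕ → Bool) → ℕ → Bool}

theorem ne_apply_iff_eq_avoidingPath (hv : Predictable v) {ω : ℕ → Bool} {k : ℕ}
    (hprefix : ∀ j < k, ω j = avoidingPath v j) :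
    ω k ≠ v ω k ↔ ω k = avoidingPath v k := by
  have htarget : v ω k = v (fun j => if _ : j < k then avoidingPath v j else false) k :=
    hv _ _ k fun j hj => by simp only [hj, dif_pos, hprefix j hj]
  rw [avoidingPath, ← htarget]
  cases ω k <;> cases v ω k <;> decide

theorem forall_lt_ne_apply_iff (hv : Predictable v) (ω : ℕ → Bool) (M : ℕ) :
    (∀ k < M, ω k ≠ v ω k) ↔ ∀ k < M, ω k = avoidingPath v k := by
  induction M with
  | zero => simp
  | succ M ih =>
    simp only [Nat.forall_lt_succ_right]
    exact ⟨fun ⟨hlt, hM⟩ => ⟨ih.mp hlt, (hv.ne_apply_iff_eq_avoidingPath (ih.mp hlt)).mp hM⟩,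
      fun ⟨hlt, hM⟩ => ⟨ih.mpr hlt, (hv.ne_apply_iff_eq_avoidingPath hlt).mpr hM⟩⟩

end Predictable

/-- The probability that no coin among the first `M` rounds equals its predictable
target is `(1/2)^M`. -/
theorem no_coin_matches_within_M_rounds
    (μ : Measure (ℕ → Bool)) (hμ : IsFairCoinSeq μ)
    (v : (ℕ → Bool) → ℕ → Bool) (hv : Predictable v) (M : ℕ) :
    μ {ω | ∀ k < M, ω k ≠ v ω k} = (1 / 2 : ENNReal) ^ M := by
  have hcylinder : {ω | ∀ k < M, ω k ≠ v ω k}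
      = {ω | ∀ k ∈ Finset.range M, ω k = avoidingPath v k} := by
    ext ω
    simp only [Set.mem_ofPred_eq, Finset.mem_range]
    exact hv.forall_lt_ne_apply_iff ω M
  rw [hcylinder, hμ, Finset.card_range]
end
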